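/- arXiv:1611.03933 — 3 statements merged into one kernel-verified Lean document; each statement's English description precedes it below -/
import Mathlib

section
/- Let b > 0, R > 0, and let η : [R,∞) → ℝ be continuous with η(s) → 0 as s → ∞. If w ∈ C²([R,∞)) satisfies w''(s) − (b/2)(s w'(s) − w(s)) = η(s) on [R,∞), together with w(s)/s → 0 and s w'(s) − w(s) → 0 as s → ∞, then w is given by the representation formula w(s) = s ∫_s^∞ x^{−2} ( ∫_x^∞ ξ exp(−(b/4)(ξ² − x²)) η(ξ) dξ ) dx for all s ∈ [R,∞). In particular the C² solution of this Cauchy problem is unique. -/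
/-!
With `v = s w' - w` the equation becomes `v' = s ((b/2) v + η)`, i.e.
`(e^{-b s²/4} v)' = s e^{-b s²/4} η`; integrating over `(x, ∞)` and using `v → 0` gives
`v(x) = -∫_x^∞ ξ e^{-b(ξ² - x²)/4} η(ξ) dξ`. Since `(w/s)' = v/s²` and `w/s → 0`, a second
integration gives `w(s) = -s ∫_s^∞ v(x)/x² dx`. Both improper integrals converge because `η`
and `v` are bounded, having limits at infinity.
-/

open Set Filter MeasureTheory Real Topology

lemma ContinuousOn.exists_norm_le_of_tendsto {E : Type*} [NormedAddCommGroup E]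
    {f : ℝ → E} {a : ℝ} {l : E} (hf : ContinuousOn f (Ici a)) (hl : Tendsto f atTop (𝓝 l)) :
    ∃ C, ∀ x ∈ Ici a, ‖f x‖ ≤ C := by
  obtain ⟨M, hM⟩ := eventually_atTop.1 <|
    hl.norm.eventually (gt_mem_nhds (lt_add_one ‖l‖))
  obtain ⟨C, hC⟩ := (isCompact_Icc (a := a) (b := max a M)).exists_bound_of_continuousOn
    (hf.mono Icc_subset_Ici_self)
  refine ⟨max C (‖l‖ + 1), fun x hx => ?_⟩
  rcases le_total x (max a M) with h | h
  · exact (hC x ⟨hx, h⟩).trans (le_max_left _ _)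
  · exact (hM x ((le_max_right a M).trans h)).le.trans (le_max_right _ _)

lemma MeasureTheory.IntegrableOn.mul_continuousOn_of_tendsto {g f : ℝ → ℝ} {a l : ℝ}
    (hg : IntegrableOn g (Ioi a)) (hf : ContinuousOn f (Ici a)) (hl : Tendsto f atTop (𝓝 l)) :
    IntegrableOn (fun x => g x * f x) (Ioi a) := by
  obtain ⟨C, hC⟩ := hf.exists_norm_le_of_tendsto hl
  refine hg.mul_bdd (c := C)
    ((hf.mono Ioi_subset_Ici_self).aestronglyMeasurable measurableSet_Ioi) ?_
  exact (ae_restrict_iff' measurableSet_Ioi).2 <|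
    Eventually.of_forall fun x hx => hC x (Ioi_subset_Ici_self hx)

lemma ContDiffOn.hasDerivAt_derivWithin {f : ℝ → ℝ} {s : Set ℝ} {n : WithTop ℕ∞} {x : ℝ}
    (hf : ContDiffOn ℝ n f s) (hn : n ≠ 0) (hs : s ∈ 𝓝 x) :
    HasDerivAt f (derivWithin f s x) x := by
  rw [derivWithin_of_mem_nhds hs]
  exact ((hf.contDiffAt hs).differentiableAt hn).hasDerivAt

lemma integral_Ioi_mul_exp_mul_eq_neg_of_hasDerivAt {b a l : ℝ} (hb : 0 < b) {v η : ℝ → ℝ}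
    (hvc : ContinuousOn v (Ici a)) (hv : ∀ x ∈ Ioi a, HasDerivAt v (x * (b / 2 * v x + η x)) x)
    (hv0 : Tendsto v atTop (𝓝 0)) (hηc : ContinuousOn η (Ici a)) (hηl : Tendsto η atTop (𝓝 l)) :
    ∫ ξ in Ioi a, ξ * exp (-(b / 4) * (ξ ^ 2 - a ^ 2)) * η ξ = -v a := by
  set g : ℝ → ℝ := fun ξ => exp (-(b / 4) * ξ ^ 2) * v ξ
  have hexp : ∀ ξ, HasDerivAt (fun t : ℝ => exp (-(b / 4) * t ^ 2))
      (exp (-(b / 4) * ξ ^ 2) * (-(b / 4) * (2 * ξ))) ξ := fun ξ => by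
    simpa using ((hasDerivAt_pow 2 ξ).const_mul (-(b / 4))).exp
  have hg : ∀ ξ ∈ Ioi a, HasDerivAt g (ξ * exp (-(b / 4) * ξ ^ 2) * η ξ) ξ := fun ξ hξ =>
    ((hexp ξ).mul (hv ξ hξ)).congr_deriv (by ring)
  have hgc : ContinuousWithinAt g (Ici a) a :=
    (by fun_prop : Continuous fun ξ : ℝ => exp (-(b / 4) * ξ ^ 2)).continuousWithinAt.mul
      (hvc a self_mem_Ici)
  have hg0 : Tendsto g atTop (𝓝 0) := by
    have hdecay : Tendsto (fun ξ : ℝ => exp (-(b / 4) * ξ ^ 2)) atTop (𝓝 0) := by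
      simp only [neg_mul]
      exact tendsto_exp_atBot.comp <| tendsto_neg_atTop_atBot.comp <|
        (tendsto_pow_atTop two_ne_zero).const_mul_atTop (by positivity : 0 < b / 4)
    simpa only [zero_mul] using hdecay.mul hv0
  have hint : IntegrableOn (fun ξ => ξ * exp (-(b / 4) * ξ ^ 2) * η ξ) (Ioi a) :=
    (integrable_mul_exp_neg_mul_sq (by positivity : 0 < b / 4)).integrableOn
      |>.mul_continuousOn_of_tendsto hηc hηl
  have hfactor : (fun ξ => ξ * exp (-(b / 4) * (ξ ^ 2 - a ^ 2)) * η ξ)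
      = fun ξ => exp (b / 4 * a ^ 2) * (ξ * exp (-(b / 4) * ξ ^ 2) * η ξ) := by
    funext ξ
    rw [show -(b / 4) * (ξ ^ 2 - a ^ 2) = b / 4 * a ^ 2 + -(b / 4) * ξ ^ 2 by ring, exp_add]
    ring
  rw [hfactor, integral_const_mul, integral_Ioi_of_hasDerivAt_of_tendsto hgc hg hint hg0,
    zero_sub, mul_neg, ← mul_assoc, ← exp_add]
  simp

lemma integral_Ioi_inv_sq_mul_eq_neg_div {w w' : ℝ → ℝ} {s l : ℝ} (hs : 0 < s)
    (hwc : ContinuousWithinAt w (Ici s) s) (hw : ∀ x ∈ Ioi s, HasDerivAt w (w' x) x)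
    (hlim : Tendsto (fun x => w x / x) atTop (𝓝 0))
    (hvc : ContinuousOn (fun x => x * w' x - w x) (Ici s))
    (hvl : Tendsto (fun x => x * w' x - w x) atTop (𝓝 l)) :
    ∫ x in Ioi s, (x ^ 2)⁻¹ * (x * w' x - w x) = -(w s / s) := by
  have hderiv : ∀ x ∈ Ioi s, HasDerivAt (fun x => w x / x) ((x ^ 2)⁻¹ * (x * w' x - w x)) x :=
    fun x hx => ((hw x hx).div (hasDerivAt_id' x) (hs.trans hx).ne').congr_deriv <| by
      field_simp
  have hint : IntegrableOn (fun x : ℝ => (x ^ 2)⁻¹) (Ioi s) := by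
    refine (integrableOn_Ioi_rpow_of_lt (by norm_num : (-2 : ℝ) < -1) hs).congr_fun
      (fun x hx => ?_) measurableSet_Ioi
    simp only
    rw [rpow_neg (hs.trans hx).le, rpow_two]
  have hcont : ContinuousWithinAt (fun x => w x / x) (Ici s) s :=
    hwc.div continuousWithinAt_id hs.ne'
  rw [integral_Ioi_of_hasDerivAt_of_tendsto hcont hderiv
    (hint.mul_continuousOn_of_tendsto hvc hvl) hlim, zero_sub]

/-- Any `C²` solution of `w'' - (b/2)(s w' - w) = η` on `[R,∞)` with
`w/s → 0` and `s w' - w → 0` at infinity is given by the representation formula; in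
particular the solution of the Cauchy problem is unique. -/
theorem representation_formula_of_solution
    (b R : ℝ) (hb : 0 < b) (hR : 0 < R) (η : ℝ → ℝ)
    (hηc : ContinuousOn η (Set.Ici R))
    (hη0 : Filter.Tendsto η Filter.atTop (nhds 0))
    (w : ℝ → ℝ) (hw : ContDiffOn ℝ 2 w (Set.Ici R))
    (hode : ∀ s ∈ Set.Ici R,
      iteratedDerivWithin 2 w (Set.Ici R) s
        - (b / 2) * (s * derivWithin w (Set.Ici R) s - w s) = η s)
    (hlim1 : Filter.Tendsto (fun s => w s / s) Filter.atTop (nhds 0))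
    (hlim2 : Filter.Tendsto (fun s => s * derivWithin w (Set.Ici R) s - w s)
      Filter.atTop (nhds 0)) :
    ∀ s ∈ Set.Ici R,
      w s = s * ∫ x in Set.Ioi s, (x ^ 2)⁻¹ *
        ∫ ξ in Set.Ioi x, ξ * Real.exp (-(b / 4) * (ξ ^ 2 - x ^ 2)) * η ξ := by
  set w' := derivWithin w (Ici R)
  set v : ℝ → ℝ := fun x => x * w' x - w x
  have hw'c : ContDiffOn ℝ 1 w' (Ici R) := hw.derivWithin (uniqueDiffOn_Ici R) (by norm_num)
  have hw_deriv : ∀ x ∈ Ioi R, HasDerivAt w (w' x) x := fun x hx =>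
    hw.hasDerivAt_derivWithin two_ne_zero (Ici_mem_nhds hx)
  have hw'_deriv : ∀ x ∈ Ioi R, HasDerivAt w' (iteratedDerivWithin 2 w (Ici R) x) x :=
    fun x hx => by
      rw [iteratedDerivWithin_succ, iteratedDerivWithin_one]
      exact hw'c.hasDerivAt_derivWithin one_ne_zero (Ici_mem_nhds hx)
  have hvc : ContinuousOn v (Ici R) :=
    (continuousOn_id.mul hw'c.continuousOn).sub hw.continuousOn
  have hv_deriv : ∀ x ∈ Ioi R, HasDerivAt v (x * (b / 2 * v x + η x)) x := fun x hx =>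
    (((hasDerivAt_id' x).mul (hw'_deriv x hx)).sub (hw_deriv x hx)).congr_deriv <| by
      rw [← hode x (Ioi_subset_Ici_self hx)]
      ring
  rintro s (hs : R ≤ s)
  have hinner : ∀ x ∈ Ioi s, (x ^ 2)⁻¹ *
      ∫ ξ in Ioi x, ξ * exp (-(b / 4) * (ξ ^ 2 - x ^ 2)) * η ξ = -((x ^ 2)⁻¹ * v x) := by
    rintro x (hx : s < x)
    have hxR : R ≤ x := hs.trans hx.le
    rw [integral_Ioi_mul_exp_mul_eq_neg_of_hasDerivAt hb (hvc.mono (Ici_subset_Ici.2 hxR))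
      (fun ξ hξ => hv_deriv ξ (hxR.trans_lt hξ)) hlim2 (hηc.mono (Ici_subset_Ici.2 hxR)) hη0,
      mul_neg]
  rw [setIntegral_congr_fun measurableSet_Ioi hinner, integral_neg,
    integral_Ioi_inv_sq_mul_eq_neg_div (hR.trans_le hs)
      ((hw.continuousOn s hs).mono (Ici_subset_Ici.2 hs))
      (fun x hx => hw_deriv x (hs.trans_lt hx)) hlim1 (hvc.mono (Ici_subset_Ici.2 hs)) hlim2]
  field_simp [(hR.trans_le hs).ne']
end

section
/- Let b > 0, R > 0, and let η : [R,∞) → ℝ be continuous with η(s) → 0 as s → ∞. Define w(s) = s ∫_s^∞ x^{−2} ( ∫_x^∞ ξ exp(−(b/4)(ξ² − x²)) η(ξ) dξ ) dx. Then w is well defined and of class C² on [R,∞), its derivatives are given by w'(s) = ∫_s^∞ x^{−2} ( ∫_x^∞ ξ exp(−(b/4)(ξ² − x²)) η(ξ) dξ ) dx − (1/s) ∫_s^∞ ξ exp(−(b/4)(ξ² − s²)) η(ξ) dξ and w''(s) = η(s) − (b/2) ∫_s^∞ ξ exp(−(b/4)(ξ² − s²)) η(ξ) dξ, and w satisfies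 w''(s) − (b/2)(s w'(s) − w(s)) = η(s) on [R,∞) together with w(s)/s → 0 and s w'(s) − w(s) → 0 as s → ∞. -/
/-!
With `G x = ∫_x^∞ ξ exp(-(b/4)(ξ² - x²)) η(ξ) dξ` the representation formula reads
`w s = s ∫_s^∞ G x / x² dx`. Since `∫_x^∞ ξ exp(-(b/4)(ξ² - x²)) dξ = 2/b` for every `x`,
`|G x| ≤ (2/b) sup_{ξ ≥ x} |η ξ|`, so `G` is bounded and `G → 0`; the outer integral therefore
converges. Writing `G x = exp((b/4) x²) ∫_x^∞ ξ exp(-(b/4) ξ²) η(ξ) dξ` gives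
`G' x = (b/2) x G x - x η x`, and differentiating the tail integrals yields
`w' s = ∫_s^∞ G/x² - G s / s` and `w'' s = -G' s / s = η s - (b/2) G s`. Hence `s w' - w = -G`,
which gives the equation and the second limit, while `w s / s` is the tail of a convergent
integral.
-/

open Set Filter MeasureTheory

/-- The representation formula for the solution of `w'' - (b/2)(s w' - w) = η`. -/
noncomputable def wrep (b : ℝ) (η : ℝ → ℝ) (s : ℝ) : ℝ :=
  s * ∫ x in Set.Ioi s, (x ^ 2)⁻¹ *
    ∫ ξ in Set.Ioi x, ξ * Real.exp (-(b / 4) * (ξ ^ 2 - x ^ 2)) * η ξ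

open Topology Real

theorem ContinuousOn.exists_forall_norm_le_of_tendsto {E : Type*} [NormedAddCommGroup E]
    {f : ℝ → E} {R : ℝ} {l : E} (hfc : ContinuousOn f (Ici R)) (hf : Tendsto f atTop (𝓝 l)) :
    ∃ C, ∀ x ∈ Ici R, ‖f x‖ ≤ C := by
  obtain ⟨N, hN⟩ := eventually_atTop.mp (hf.norm.eventually (gt_mem_nhds (lt_add_one ‖l‖)))
  obtain ⟨C, hC⟩ := isCompact_Icc.exists_bound_of_continuousOn
    (hfc.mono (Icc_subset_Ici_self : Icc R N ⊆ Ici R))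
  refine ⟨max C (‖l‖ + 1), fun x hx => ?_⟩
  rcases le_total x N with hxN | hNx
  · exact (hC x ⟨hx, hxN⟩).trans (le_max_left _ _)
  · exact (hN x hNx).le.trans (le_max_right _ _)

theorem hasDerivWithinAt_integral_Ioi {E : Type*} [NormedAddCommGroup E] [NormedSpace ℝ E]
    [CompleteSpace E] {f : ℝ → E} {a s : ℝ} (hfi : IntegrableOn f (Ioi a))
    (hfc : ContinuousOn f (Ici a)) (hs : a ≤ s) :
    HasDerivWithinAt (fun u => ∫ x in Ioi u, f x) (-f s) (Ici a) s := by
  have : Fact (s ∈ Icc a (s + 1)) := ⟨⟨hs, by linarith⟩⟩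
  have hprim : HasDerivWithinAt (fun u => ∫ x in a..u, f x) (f s) (Icc a (s + 1)) s :=
    intervalIntegral.integral_hasDerivWithinAt_right
      ((hfc.mono Icc_subset_Ici_self).intervalIntegrable_of_Icc hs)
      ((hfc.mono Icc_subset_Ici_self).stronglyMeasurableAtFilter_nhdsWithin measurableSet_Icc s)
      ((hfc s hs).mono Icc_subset_Ici_self)
  have hmem : Icc a (s + 1) ∈ 𝓝[Ici a] s := by
    simpa [Ici_inter_Iic] using inter_mem_nhdsWithin (Ici a) (Iic_mem_nhds (lt_add_one s))
  have htail : ∀ u ∈ Ici a, ∫ x in Ioi u, f x = (∫ x in Ioi a, f x) - ∫ x in a..u, f x :=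
    fun u hu => by rw [← intervalIntegral.integral_Ioi_sub_Ioi hfi hu, sub_sub_cancel]
  simpa using ((hasDerivWithinAt_const s (Ici a) (∫ x in Ioi a, f x)).sub
    (hprim.mono_of_mem_nhdsWithin hmem)).congr htail (htail s hs)

theorem integrableOn_Ioi_inv_sq {R : ℝ} (hR : 0 < R) :
    IntegrableOn (fun x : ℝ => (x ^ 2)⁻¹) (Ioi R) :=
  (integrableOn_Ioi_rpow_of_lt (by norm_num : (-2 : ℝ) < -1) hR).congr_fun
    (fun x _ => by simp [rpow_neg_ofNat]) measurableSet_Ioi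

section SecondDerivative

variable {𝕜 F : Type*} [NontriviallyNormedField 𝕜] [NormedAddCommGroup F] [NormedSpace 𝕜 F]
  {f f' f'' : 𝕜 → F} {s : Set 𝕜}

theorem iteratedDerivWithin_two_eq_of_hasDerivWithinAt (hs : UniqueDiffOn 𝕜 s)
    (hf : ∀ x ∈ s, HasDerivWithinAt f (f' x) s x)
    (hf' : ∀ x ∈ s, HasDerivWithinAt f' (f'' x) s x) {x : 𝕜} (hx : x ∈ s) :
    iteratedDerivWithin 2 f s x = f'' x := by
  rw [iteratedDerivWithin_succ, iteratedDerivWithin_one,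
    derivWithin_congr (fun y hy => (hf y hy).derivWithin (hs y hy))
      ((hf x hx).derivWithin (hs x hx))]
  exact (hf' x hx).derivWithin (hs x hx)

theorem contDiffOn_two_of_hasDerivWithinAt (hs : UniqueDiffOn 𝕜 s)
    (hf : ∀ x ∈ s, HasDerivWithinAt f (f' x) s x)
    (hf' : ∀ x ∈ s, HasDerivWithinAt f' (f'' x) s x) (hf'' : ContinuousOn f'' s) :
    ContDiffOn 𝕜 2 f s := by
  have hC1 : ContDiffOn 𝕜 1 f' s := by
    rw [contDiffOn_one_iff_derivWithin hs]
    exact ⟨fun x hx => (hf' x hx).differentiableWithinAt,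
      hf''.congr fun x hx => (hf' x hx).derivWithin (hs x hx)⟩
  rw [show (2 : WithTop ℕ∞) = 1 + 1 from rfl, contDiffOn_succ_iff_derivWithin hs]
  exact ⟨fun x hx => (hf x hx).differentiableWithinAt, by simp,
    hC1.congr fun x hx => (hf x hx).derivWithin (hs x hx)⟩

end SecondDerivative

section GaussianWeight

variable {c : ℝ}

theorem mul_exp_neg_mul_sq_sub (c x ξ : ℝ) :
    ξ * exp (-c * (ξ ^ 2 - x ^ 2)) = exp (c * x ^ 2) * (ξ * exp (-c * ξ ^ 2)) := by
  rw [show -c * (ξ ^ 2 - x ^ 2) = c * x ^ 2 + -c * ξ ^ 2 by ring, exp_add]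
  ring

theorem integral_Ioi_mul_exp_neg_mul_sq (hc : 0 < c) (a : ℝ) :
    ∫ ξ in Ioi a, ξ * exp (-c * ξ ^ 2) = exp (-c * a ^ 2) / (2 * c) := by
  have hderiv (x : ℝ) : HasDerivAt (fun ξ => -exp (-c * ξ ^ 2) / (2 * c))
      (x * exp (-c * x ^ 2)) x := by
    have hsq : HasDerivAt (fun ξ => -c * ξ ^ 2) (-c * (2 * x)) x := by
      simpa using (hasDerivAt_pow 2 x).const_mul (-c)
    exact (hsq.exp.neg.div_const (2 * c)).congr_deriv (by field_simp)
  have hlim : Tendsto (fun ξ => -exp (-c * ξ ^ 2) / (2 * c)) atTop (𝓝 0) := by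
    have := (tendsto_pow_atTop two_ne_zero).const_mul_atTop_of_neg (neg_neg_of_pos hc)
    simpa using (tendsto_exp_atBot.comp this).neg.div_const (2 * c)
  rw [integral_Ioi_of_hasDerivAt_of_tendsto' (fun x _ => hderiv x)
    (integrable_mul_exp_neg_mul_sq hc).integrableOn hlim]
  ring

theorem integrable_mul_exp_neg_mul_sq_sub (hc : 0 < c) (x : ℝ) :
    Integrable fun ξ => ξ * exp (-c * (ξ ^ 2 - x ^ 2)) := by
  simpa only [mul_exp_neg_mul_sq_sub] using (integrable_mul_exp_neg_mul_sq hc).const_mul _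

theorem integral_Ioi_mul_exp_neg_mul_sq_sub (hc : 0 < c) (x : ℝ) :
    ∫ ξ in Ioi x, ξ * exp (-c * (ξ ^ 2 - x ^ 2)) = (2 * c)⁻¹ := by
  simp only [mul_exp_neg_mul_sq_sub, integral_const_mul, integral_Ioi_mul_exp_neg_mul_sq hc]
  rw [mul_div_assoc', ← exp_add]
  simp

end GaussianWeight

noncomputable def gaussTail (c : ℝ) (η : ℝ → ℝ) (x : ℝ) : ℝ :=
  ∫ ξ in Ioi x, ξ * exp (-c * (ξ ^ 2 - x ^ 2)) * η ξ

section GaussTail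

variable {c K R : ℝ} {η : ℝ → ℝ}

theorem gaussTail_eq_exp_mul (c : ℝ) (η : ℝ → ℝ) (x : ℝ) :
    gaussTail c η x = exp (c * x ^ 2) * ∫ ξ in Ioi x, ξ * exp (-c * ξ ^ 2) * η ξ := by
  simp only [gaussTail, mul_exp_neg_mul_sq_sub, ← integral_const_mul, mul_assoc]

theorem integrableOn_mul_exp_neg_mul_sq_mul (hc : 0 < c) {s : Set ℝ} (hs : MeasurableSet s)
    (hηc : ContinuousOn η s) (hK : ∀ ξ ∈ s, ‖η ξ‖ ≤ K) :
    IntegrableOn (fun ξ => ξ * exp (-c * ξ ^ 2) * η ξ) s :=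
  (integrable_mul_exp_neg_mul_sq hc).integrableOn.mul_bdd (hηc.aestronglyMeasurable hs)
    (ae_restrict_of_forall_mem hs hK)

theorem integrableOn_mul_exp_neg_mul_sq_sub_mul (hc : 0 < c) (x : ℝ) {s : Set ℝ}
    (hs : MeasurableSet s) (hηc : ContinuousOn η s) (hK : ∀ ξ ∈ s, ‖η ξ‖ ≤ K) :
    IntegrableOn (fun ξ => ξ * exp (-c * (ξ ^ 2 - x ^ 2)) * η ξ) s := by
  have h := (integrableOn_mul_exp_neg_mul_sq_mul hc hs hηc hK).const_mul (exp (c * x ^ 2))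
  simp only [mul_exp_neg_mul_sq_sub, mul_assoc] at h ⊢
  exact h

theorem norm_gaussTail_le (hc : 0 < c) {x : ℝ} (hx : 0 ≤ x) (hK : ∀ ξ ∈ Ioi x, ‖η ξ‖ ≤ K) :
    ‖gaussTail c η x‖ ≤ K / (2 * c) := by
  have hpointwise : ∀ ξ ∈ Ioi x,
      ‖ξ * exp (-c * (ξ ^ 2 - x ^ 2)) * η ξ‖ ≤ ξ * exp (-c * (ξ ^ 2 - x ^ 2)) * K := by
    intro ξ hξ
    have hξ0 : 0 ≤ ξ := hx.trans (le_of_lt hξ)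
    rw [norm_mul, norm_of_nonneg (by positivity)]
    exact mul_le_mul_of_nonneg_left (hK ξ hξ) (by positivity)
  calc ‖gaussTail c η x‖ ≤ ∫ ξ in Ioi x, ξ * exp (-c * (ξ ^ 2 - x ^ 2)) * K :=
        norm_integral_le_of_norm_le
          ((integrable_mul_exp_neg_mul_sq_sub hc x).integrableOn.mul_const K)
          (ae_restrict_of_forall_mem measurableSet_Ioi hpointwise)
    _ = K / (2 * c) := by
        rw [integral_mul_const, integral_Ioi_mul_exp_neg_mul_sq_sub hc, inv_mul_eq_div]

theorem tendsto_gaussTail_atTop (hc : 0 < c) (hη : Tendsto η atTop (𝓝 0)) :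
    Tendsto (gaussTail c η) atTop (𝓝 0) := by
  rw [Metric.tendsto_atTop] at hη ⊢
  intro ε hε
  obtain ⟨N, hN⟩ := hη (c * ε) (by positivity)
  refine ⟨max N 0, fun x hx => ?_⟩
  have hK : ∀ ξ ∈ Ioi x, ‖η ξ‖ ≤ c * ε := fun ξ hξ => by
    simpa using (hN ξ ((le_max_left N 0).trans (hx.trans (le_of_lt hξ)))).le
  calc dist (gaussTail c η x) 0 ≤ c * ε / (2 * c) := by
        simpa using norm_gaussTail_le hc ((le_max_right N 0).trans hx) hK
    _ < ε := by
        rw [mul_comm 2 c, mul_div_mul_left _ _ hc.ne']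
        linarith

theorem hasDerivWithinAt_gaussTail (hc : 0 < c) (hηc : ContinuousOn η (Ici R))
    (hK : ∀ ξ ∈ Ici R, ‖η ξ‖ ≤ K) {s : ℝ} (hs : R ≤ s) :
    HasDerivWithinAt (gaussTail c η) (2 * c * s * gaussTail c η s - s * η s) (Ici R) s := by
  have hF := hasDerivWithinAt_integral_Ioi
    ((integrableOn_mul_exp_neg_mul_sq_mul hc measurableSet_Ici hηc hK).mono_set
      Ioi_subset_Ici_self) (by fun_prop) hs
  have hsq : HasDerivAt (fun x => c * x ^ 2) (c * (2 * s)) s := by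
    simpa using (hasDerivAt_pow 2 s).const_mul c
  have hexp : exp (c * s ^ 2) * exp (-c * s ^ 2) = 1 := by rw [← exp_add]; simp
  rw [funext (gaussTail_eq_exp_mul c η)]
  refine (hsq.exp.hasDerivWithinAt.mul hF).congr_deriv ?_
  linear_combination -(s * η s) * hexp

theorem continuousOn_gaussTail (hc : 0 < c) (hηc : ContinuousOn η (Ici R))
    (hK : ∀ ξ ∈ Ici R, ‖η ξ‖ ≤ K) : ContinuousOn (gaussTail c η) (Ici R) :=
  fun _ hs => (hasDerivWithinAt_gaussTail hc hηc hK hs).continuousWithinAt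

theorem continuousOn_inv_sq_mul_gaussTail (hc : 0 < c) (hR : 0 < R)
    (hηc : ContinuousOn η (Ici R)) (hK : ∀ ξ ∈ Ici R, ‖η ξ‖ ≤ K) :
    ContinuousOn (fun x => (x ^ 2)⁻¹ * gaussTail c η x) (Ici R) :=
  ((continuousOn_pow 2).inv₀ fun _ hx => pow_ne_zero 2 (hR.trans_le hx).ne').mul
    (continuousOn_gaussTail hc hηc hK)

theorem integrableOn_inv_sq_mul_gaussTail (hc : 0 < c) (hR : 0 < R)
    (hηc : ContinuousOn η (Ici R)) (hK : ∀ ξ ∈ Ici R, ‖η ξ‖ ≤ K) :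
    IntegrableOn (fun x => (x ^ 2)⁻¹ * gaussTail c η x) (Ioi R) :=
  (integrableOn_Ioi_inv_sq hR).mul_bdd
    (((continuousOn_gaussTail hc hηc hK).aestronglyMeasurable measurableSet_Ici).mono_set
      Ioi_subset_Ici_self)
    (ae_restrict_of_forall_mem measurableSet_Ioi fun _ hx =>
      norm_gaussTail_le hc (hR.le.trans (le_of_lt hx)) fun ξ hξ =>
        hK ξ (hx.out.trans hξ.out).le)

end GaussTail

section RepresentationFormula

variable {b K R s : ℝ} {η : ℝ → ℝ}

theorem wrep_eq (b : ℝ) (η : ℝ → ℝ) (s : ℝ) :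
    wrep b η s = s * ∫ x in Ioi s, (x ^ 2)⁻¹ * gaussTail (b / 4) η x := rfl

noncomputable def wrepDeriv (b : ℝ) (η : ℝ → ℝ) (s : ℝ) : ℝ :=
  (∫ x in Ioi s, (x ^ 2)⁻¹ * gaussTail (b / 4) η x) - s⁻¹ * gaussTail (b / 4) η s

theorem hasDerivWithinAt_integral_Ioi_inv_sq_mul_gaussTail (hb : 0 < b) (hR : 0 < R)
    (hηc : ContinuousOn η (Ici R)) (hK : ∀ ξ ∈ Ici R, ‖η ξ‖ ≤ K) (hs : R ≤ s) :
    HasDerivWithinAt (fun u => ∫ x in Ioi u, (x ^ 2)⁻¹ * gaussTail (b / 4) η x)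
      (-((s ^ 2)⁻¹ * gaussTail (b / 4) η s)) (Ici R) s :=
  hasDerivWithinAt_integral_Ioi (integrableOn_inv_sq_mul_gaussTail (by positivity) hR hηc hK)
    (continuousOn_inv_sq_mul_gaussTail (by positivity) hR hηc hK) hs

theorem hasDerivWithinAt_wrep (hb : 0 < b) (hR : 0 < R) (hηc : ContinuousOn η (Ici R))
    (hK : ∀ ξ ∈ Ici R, ‖η ξ‖ ≤ K) (hs : R ≤ s) :
    HasDerivWithinAt (wrep b η) (wrepDeriv b η s) (Ici R) s := by
  have hs0 : s ≠ 0 := (hR.trans_le hs).ne'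
  refine ((hasDerivWithinAt_id s (Ici R)).mul
    (hasDerivWithinAt_integral_Ioi_inv_sq_mul_gaussTail hb hR hηc hK hs)).congr_deriv ?_
  rw [wrepDeriv, id]
  field_simp
  ring

theorem hasDerivWithinAt_wrepDeriv (hb : 0 < b) (hR : 0 < R) (hηc : ContinuousOn η (Ici R))
    (hK : ∀ ξ ∈ Ici R, ‖η ξ‖ ≤ K) (hs : R ≤ s) :
    HasDerivWithinAt (wrepDeriv b η) (η s - b / 2 * gaussTail (b / 4) η s) (Ici R) s := by
  have hs0 : s ≠ 0 := (hR.trans_le hs).ne'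
  refine ((hasDerivWithinAt_integral_Ioi_inv_sq_mul_gaussTail hb hR hηc hK hs).sub
    ((hasDerivAt_inv hs0).hasDerivWithinAt.mul
      (hasDerivWithinAt_gaussTail (by positivity) hηc hK hs))).congr_deriv ?_
  field_simp
  ring

theorem mul_wrepDeriv_sub_wrep (b : ℝ) (η : ℝ → ℝ) (hs : s ≠ 0) :
    s * wrepDeriv b η s - wrep b η s = -gaussTail (b / 4) η s := by
  rw [wrepDeriv, wrep_eq]
  field_simp
  ring

theorem tendsto_wrep_div_atTop (b : ℝ) (η : ℝ → ℝ) :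
    Tendsto (fun s => wrep b η s / s) atTop (𝓝 0) :=
  (tendsto_integral_Ioi_zero tendsto_id).congr' <| by
    filter_upwards [eventually_gt_atTop 0] with s hs
    rw [wrep_eq, mul_div_cancel_left₀ _ hs.ne', id]

end RepresentationFormula

/-- The function defined by the representation formula is well defined and
of class `C²` on `[R,∞)`, its first and second derivatives are given by explicit formulas,
it solves `w'' - (b/2)(s w' - w) = η` on `[R,∞)`, and it satisfies `w/s → 0` and
`s w' - w → 0` at infinity. -/
theorem representation_formula_solves
    (b R : ℝ) (hb : 0 < b) (hR : 0 < R) (η : ℝ → ℝ)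
    (hηc : ContinuousOn η (Set.Ici R))
    (hη0 : Filter.Tendsto η Filter.atTop (nhds 0)) :
    (∀ x ∈ Set.Ici R,
      IntegrableOn (fun ξ => ξ * Real.exp (-(b / 4) * (ξ ^ 2 - x ^ 2)) * η ξ) (Set.Ioi x)) ∧
    (∀ s ∈ Set.Ici R,
      IntegrableOn (fun x => (x ^ 2)⁻¹ *
        ∫ ξ in Set.Ioi x, ξ * Real.exp (-(b / 4) * (ξ ^ 2 - x ^ 2)) * η ξ) (Set.Ioi s)) ∧
    ContDiffOn ℝ 2 (wrep b η) (Set.Ici R) ∧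
    (∀ s ∈ Set.Ici R,
      derivWithin (wrep b η) (Set.Ici R) s
        = (∫ x in Set.Ioi s, (x ^ 2)⁻¹ *
            ∫ ξ in Set.Ioi x, ξ * Real.exp (-(b / 4) * (ξ ^ 2 - x ^ 2)) * η ξ)
          - s⁻¹ * ∫ ξ in Set.Ioi s, ξ * Real.exp (-(b / 4) * (ξ ^ 2 - s ^ 2)) * η ξ) ∧
    (∀ s ∈ Set.Ici R,
      iteratedDerivWithin 2 (wrep b η) (Set.Ici R) s
        = η s - (b / 2) * ∫ ξ in Set.Ioi s, ξ * Real.exp (-(b / 4) * (ξ ^ 2 - s ^ 2)) * η ξ) ∧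
    (∀ s ∈ Set.Ici R,
      iteratedDerivWithin 2 (wrep b η) (Set.Ici R) s
        - (b / 2) * (s * derivWithin (wrep b η) (Set.Ici R) s - wrep b η s) = η s) ∧
    Filter.Tendsto (fun s => wrep b η s / s) Filter.atTop (nhds 0) ∧
    Filter.Tendsto (fun s => s * derivWithin (wrep b η) (Set.Ici R) s - wrep b η s)
      Filter.atTop (nhds 0) := by
  obtain ⟨K, hK⟩ := hηc.exists_forall_norm_le_of_tendsto hη0
  have hc : 0 < b / 4 := by positivity
  have hw' (s) (hs : s ∈ Ici R) := hasDerivWithinAt_wrep hb hR hηc hK hs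
  have hw'' (s) (hs : s ∈ Ici R) := hasDerivWithinAt_wrepDeriv hb hR hηc hK hs
  have hdw (s) (hs : s ∈ Ici R) : derivWithin (wrep b η) (Ici R) s = wrepDeriv b η s :=
    (hw' s hs).derivWithin (uniqueDiffOn_Ici R s hs)
  have hd2w (s) (hs : s ∈ Ici R) :
      iteratedDerivWithin 2 (wrep b η) (Ici R) s = η s - b / 2 * gaussTail (b / 4) η s :=
    iteratedDerivWithin_two_eq_of_hasDerivWithinAt (uniqueDiffOn_Ici R) hw' hw'' hs
  have hsw (s) (hs : s ∈ Ici R) :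
      s * derivWithin (wrep b η) (Ici R) s - wrep b η s = -gaussTail (b / 4) η s := by
    rw [hdw s hs, mul_wrepDeriv_sub_wrep b η (hR.trans_le hs).ne']
  refine ⟨fun x hx => ?_, fun s hs => ?_, ?_, hdw, hd2w, fun s hs => ?_,
    tendsto_wrep_div_atTop b η, ?_⟩
  · exact (integrableOn_mul_exp_neg_mul_sq_sub_mul hc x measurableSet_Ici hηc hK).mono_set
      (Ioi_subset_Ici hx)
  · exact (integrableOn_inv_sq_mul_gaussTail hc hR hηc hK).mono_set (Ioi_subset_Ioi hs)
  · exact contDiffOn_two_of_hasDerivWithinAt (uniqueDiffOn_Ici R) hw' hw''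
      (hηc.sub (continuousOn_const.mul (continuousOn_gaussTail hc hηc hK)))
  · rw [hd2w s hs, hsw s hs]
    ring
  · simpa using (tendsto_gaussTail_atTop hc hη0).neg.congr'
      (eventually_ge_atTop R |>.mono fun s hs => (hsw s hs).symm)
end

section
/- Let n ≥ 2 and k ≥ 3 be integers, σ > 0, K a bounded open neighborhood of (1,…,1,0) in ℝⁿ, and M > 0. Then there exists R ≥ 1, depending only on k, σ, K and M, such that for every v ∈ C^k([R,∞)) with ‖v‖_ℑ ≤ M, for every θ ∈ [0,1] and every s ∈ [R,∞), the point ω(v;θ)(s) := ( (σs/(σs + θ v(s))) · 1⃗_{n−1}, −σs θ v''(s)/(1 + (σ + θ v'(s))²) ) ∈ ℝⁿ lies in K. -/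
open Set Filter MeasureTheory

/-- The vector in `ℝⁿ` whose first `n-1` coordinates equal `a` and whose last
coordinate equals `b`. -/
noncomputable def cvec (n : ℕ) (a b : ℝ) : Fin n → ℝ :=
  fun i => if (i : ℕ) < n - 1 then a else b

/-!
The weighted bounds give `|v s| ≤ M / s` and `|v'' s| ≤ M / s³`. Hence the first `n - 1`
coordinates of `ω(v;θ)(s)` differ from `1` by at most `2M / (σ s²)`, and the last one is at most
`σ M / s²` in absolute value, since its denominator is at least `1`. Both bounds tend to `0` as
`s → ∞`, uniformly in `v` and `θ`, so for `s` large `ω(v;θ)(s)` lies in a sup-norm ball around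
`(1, …, 1, 0)` contained in the open set `K`.
-/

lemma cvec_mem_ball {n : ℕ} {a a' b b' ε : ℝ} (hε : 0 < ε) (ha : |a - a'| < ε)
    (hb : |b - b'| < ε) : cvec n a b ∈ Metric.ball (cvec n a' b') ε := by
  rw [Metric.mem_ball, dist_pi_lt_iff hε]
  intro i
  simp only [cvec, Real.dist_eq]
  split_ifs
  · exact ha
  · exact hb

lemma abs_div_add_sub_one_le {x y : ℝ} (hx : 0 < x) (hy : 2 * |y| ≤ x) :
    |x / (x + y) - 1| ≤ 2 * |y| / x := by
  have hxy : x / 2 ≤ x + y := by linarith [neg_abs_le y]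
  have hxy0 : 0 < x + y := by linarith
  rw [div_sub_one hxy0.ne', sub_add_cancel_left, abs_div, abs_neg, abs_of_pos hxy0,
    div_le_div_iff₀ hxy0 hx]
  nlinarith [abs_nonneg y]

lemma abs_le_div_of_mul_abs_le {s x M : ℝ} (hs : 0 < s) (h : s * |x| ≤ M) : |x| ≤ M / s := by
  rw [le_div_iff₀ hs]
  linarith

lemma eventually_div_sq_lt (c : ℝ) {δ : ℝ} (hδ : 0 < δ) : ∀ᶠ s : ℝ in atTop, c / s ^ 2 < δ :=
  (tendsto_const_nhds.div_atTop (tendsto_pow_atTop two_ne_zero)).eventually_lt_const hδ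

section OmegaBounds

variable {σ s θ M : ℝ}

lemma abs_div_add_mul_sub_one_le (hσ : 0 < σ) (hs : 0 < s) (hθ : θ ∈ Icc (0 : ℝ) 1) {x : ℝ}
    (hx : |x| ≤ M / s) (hsmall : 2 * M / σ / s ^ 2 ≤ 1) :
    |σ * s / (σ * s + θ * x) - 1| ≤ 2 * M / σ / s ^ 2 := by
  have hσs : 0 < σ * s := mul_pos hσ hs
  have hθx : |θ * x| ≤ M / s := by
    rw [abs_mul, abs_of_nonneg hθ.1]
    exact (mul_le_of_le_one_left (abs_nonneg x) hθ.2).trans hx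
  have hbound : 2 * (M / s) / (σ * s) = 2 * M / σ / s ^ 2 := by field_simp
  have hθx' : 2 * |θ * x| ≤ σ * s := by
    have := (div_le_one hσs).1 (hbound ▸ hsmall)
    linarith
  calc |σ * s / (σ * s + θ * x) - 1| ≤ 2 * |θ * x| / (σ * s) := abs_div_add_sub_one_le hσs hθx'
    _ ≤ 2 * (M / s) / (σ * s) := by gcongr
    _ = 2 * M / σ / s ^ 2 := hbound

lemma abs_neg_mul_div_one_add_sq_le (hσ : 0 < σ) (hs : 0 < s) (hθ : θ ∈ Icc (0 : ℝ) 1)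
    {y z : ℝ} (hy : |y| ≤ M / s ^ 3) :
    |-(σ * s * θ * y) / (1 + (σ + θ * z) ^ 2)| ≤ σ * M / s ^ 2 := by
  have hden : 1 ≤ 1 + (σ + θ * z) ^ 2 := le_add_of_nonneg_right (sq_nonneg _)
  have hθy : θ * |y| ≤ M / s ^ 3 := (mul_le_of_le_one_left (abs_nonneg y) hθ.2).trans hy
  calc |-(σ * s * θ * y) / (1 + (σ + θ * z) ^ 2)|
      ≤ |-(σ * s * θ * y)| := by
        rw [abs_div, abs_of_pos (zero_lt_one.trans_le hden)]
        exact div_le_self (abs_nonneg _) hden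
    _ = σ * s * (θ * |y|) := by
        rw [abs_neg, abs_mul, abs_mul, abs_mul, abs_of_pos hσ, abs_of_pos hs,
          abs_of_nonneg hθ.1, mul_assoc]
    _ ≤ σ * s * (M / s ^ 3) := by gcongr
    _ = σ * M / s ^ 2 := by field_simp

end OmegaBounds

theorem omega_stays_in_K_general
    (n k : ℕ) (hk : 3 ≤ k) (σ : ℝ) (hσ : 0 < σ)
    (K : Set (Fin n → ℝ)) (hKopen : IsOpen K)
    (hKmem : cvec n 1 0 ∈ K) (M : ℝ) :
    ∃ R : ℝ, 1 ≤ R ∧ ∀ v : ℝ → ℝ, ContDiffOn ℝ k v (Set.Ici R) →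
      (∀ j < k, ∀ s ∈ Set.Ici R,
        s ^ (j + 1) * |iteratedDerivWithin j v (Set.Ici R) s| ≤ M) →
      (∀ s ∈ Set.Ici R,
        s ^ k * |iteratedDerivWithin k v (Set.Ici R) s| ≤ M) →
      ∀ θ ∈ Set.Icc (0 : ℝ) 1, ∀ s ∈ Set.Ici R,
        cvec n (σ * s / (σ * s + θ * v s))
          (-(σ * s * θ * iteratedDerivWithin 2 v (Set.Ici R) s) /
            (1 + (σ + θ * derivWithin v (Set.Ici R) s) ^ 2)) ∈ K := by
  obtain ⟨ε, hε, hball⟩ := Metric.isOpen_iff.mp hKopen _ hKmem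
  obtain ⟨R, hR⟩ := eventually_atTop.mp <| (eventually_ge_atTop 1).and <|
    (eventually_div_sq_lt (2 * M / σ) one_pos).and <|
    (eventually_div_sq_lt (2 * M / σ) hε).and (eventually_div_sq_lt (σ * M) hε)
  refine ⟨R, (hR R le_rfl).1, fun v _ hv _ θ hθ s hs => hball (cvec_mem_ball hε ?_ ?_)⟩
  all_goals
    obtain ⟨hs1, hsmall, hhead, hlast⟩ := hR s hs
    have hs0 : 0 < s := zero_lt_one.trans_le hs1
  · have hv0 := abs_le_div_of_mul_abs_le hs0 (by simpa using hv 0 (by omega) s hs)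
    exact (abs_div_add_mul_sub_one_le hσ hs0 hθ hv0 hsmall.le).trans_lt hhead
  · have hv2 := abs_le_div_of_mul_abs_le (pow_pos hs0 3) (hv 2 (by omega) s hs)
    rw [sub_zero]
    exact (abs_neg_mul_div_one_add_sq_le hσ hs0 hθ hv2).trans_lt hlast

/-- For `R` large (depending on `k`, `σ`, `K`, `M`), for every `v` with
`‖v‖_ℑ ≤ M`, every `θ ∈ [0,1]` and every `s ≥ R`, the rescaled curvature vector
`ω(v;θ)(s) = (σs/(σs+θv)·1⃗, −σsθv''/(1+(σ+θv')²))` lies in `K`. -/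
theorem omega_stays_in_K
    (n k : ℕ) (hn : 2 ≤ n) (hk : 3 ≤ k) (σ : ℝ) (hσ : 0 < σ)
    (K : Set (Fin n → ℝ)) (hKopen : IsOpen K) (hKbdd : Bornology.IsBounded K)
    (hKmem : cvec n 1 0 ∈ K) (M : ℝ) (hM : 0 < M) :
    ∃ R : ℝ, 1 ≤ R ∧ ∀ v : ℝ → ℝ, ContDiffOn ℝ k v (Set.Ici R) →
      (∀ j < k, ∀ s ∈ Set.Ici R,
        s ^ (j + 1) * |iteratedDerivWithin j v (Set.Ici R) s| ≤ M) →
      (∀ s ∈ Set.Ici R,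
        s ^ k * |iteratedDerivWithin k v (Set.Ici R) s| ≤ M) →
      ∀ θ ∈ Set.Icc (0 : ℝ) 1, ∀ s ∈ Set.Ici R,
        cvec n (σ * s / (σ * s + θ * v s))
          (-(σ * s * θ * iteratedDerivWithin 2 v (Set.Ici R) s) /
            (1 + (σ + θ * derivWithin v (Set.Ici R) s) ^ 2)) ∈ K :=
  omega_stays_in_K_general n k hk σ hσ K hKopen hKmem M
end
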